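/- arXiv:1312.7650 — 3 statements merged into one kernel-verified Lean document; each statement's English description precedes it below -/
import Mathlib

section
/- Let M be a 2×2 complex matrix whose two diagonal entries are ±z or ±conj(z) for a single complex variable z (nonzero values allowed for z), whose off-diagonal entries are each either 0 or of the form ±w, ±conj(w) for a variable w ≠ z, and which satisfies M^H M = (sum of squared moduli of the variables appearing) · I_2 identically. Then either both off-diagonal entries are zero, or both are nonzero and involve the same variable w. -/
open Matrix Complex

/-- An entry (as a function of the variables `z : Fin k → ℂ`) is, up to sign and
conjugation, the variable `z b`. -/
def IsVarEntry {k : ℕ} (e : (Fin k → ℂ) → ℂ) (b : Fin k) : Prop :=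
  (e = fun z => z b) ∨ (e = fun z => -z b) ∨
  (e = fun z => starRingEnd ℂ (z b)) ∨ (e = fun z => -starRingEnd ℂ (z b))

lemma var_sq {k : ℕ} {e : (Fin k → ℂ) → ℂ} {b : Fin k} (h : IsVarEntry e b)
    (z : Fin k → ℂ) : starRingEnd ℂ (e z) * e z = (Complex.normSq (z b) : ℂ) := by
  rcases h with h | h | h | h <;> subst h <;>
    simp [Complex.normSq_eq_conj_mul_self, mul_comm]

lemma var_ne {k : ℕ} {e : (Fin k → ℂ) → ℂ} {b : Fin k} (h : IsVarEntry e b)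
    {z : Fin k → ℂ} (hz : z b ≠ 0) : e z ≠ 0 := by
  intro h0
  have := var_sq h z
  rw [h0] at this
  simp at this
  exact hz (Complex.normSq_eq_zero.mp (by exact_mod_cast this.symm))

lemma var_zero {k : ℕ} {e : (Fin k → ℂ) → ℂ} {b : Fin k} (h : IsVarEntry e b)
    {z : Fin k → ℂ} (hz : z b = 0) : e z = 0 := by
  rcases h with h | h | h | h <;> subst h <;> simp [hz]

/-- The variable `z b` appears in `M` (i.e. `M` depends on it). -/
def VarAppears {k p q : ℕ} (M : (Fin k → ℂ) → Matrix (Fin p) (Fin q) ℂ) (b : Fin k) : Prop :=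
  ∃ z z' : Fin k → ℂ, (∀ b' : Fin k, b' ≠ b → z b' = z' b') ∧ M z ≠ M z'

open scoped Classical in
/-- A 2×2 matrix in the variables `z_1,…,z_k` whose diagonal entries are
`±z_a` or `±z_a^*` for a single variable `z_a`, whose off-diagonal entries are each
either `0` or `±z_b`, `±z_b^*` for some variable `b ≠ a`, and which satisfies
`Mᴴ M = (sum of squared moduli of the appearing variables) • I₂` identically, has
either both off-diagonal entries zero, or both nonzero involving the same variable. -/
theorem two_by_two_classification (k : ℕ) (a : Fin k)
    (M : (Fin k → ℂ) → Matrix (Fin 2) (Fin 2) ℂ)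
    (h00 : IsVarEntry (fun z => M z 0 0) a)
    (h11 : IsVarEntry (fun z => M z 1 1) a)
    (h01 : (fun z => M z 0 1) = (fun _ => (0 : ℂ)) ∨
      ∃ b : Fin k, b ≠ a ∧ IsVarEntry (fun z => M z 0 1) b)
    (h10 : (fun z => M z 1 0) = (fun _ => (0 : ℂ)) ∨
      ∃ b : Fin k, b ≠ a ∧ IsVarEntry (fun z => M z 1 0) b)
    (horth : ∀ z : Fin k → ℂ,
      (M z)ᴴ * M z
        = ((∑ b ∈ Finset.univ.filter (VarAppears M), Complex.normSq (z b) : ℝ) : ℂ) •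
            (1 : Matrix (Fin 2) (Fin 2) ℂ)) :
    ((fun z => M z 0 1) = (fun _ => (0 : ℂ)) ∧ (fun z => M z 1 0) = (fun _ => (0 : ℂ))) ∨
    (∃ b : Fin k, b ≠ a ∧ IsVarEntry (fun z => M z 0 1) b ∧
      IsVarEntry (fun z => M z 1 0) b) := by
  have diag : ∀ z, starRingEnd ℂ (M z 0 0) * M z 0 0 + starRingEnd ℂ (M z 1 0) * M z 1 0
      = starRingEnd ℂ (M z 0 1) * M z 0 1 + starRingEnd ℂ (M z 1 1) * M z 1 1 := by
    intro z
    have h0 := congrFun (congrFun (horth z) 0) 0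
    have h1 := congrFun (congrFun (horth z) 1) 1
    simp [Matrix.mul_apply, Fin.sum_univ_two, Matrix.conjTranspose_apply,
      Matrix.smul_apply, Matrix.one_apply] at h0 h1
    rw [h0, h1]
  have offd : ∀ z, starRingEnd ℂ (M z 0 0) * M z 0 1 + starRingEnd ℂ (M z 1 0) * M z 1 1 = 0 := by
    intro z
    have h0 := congrFun (congrFun (horth z) 0) 1
    simpa [Matrix.mul_apply, Fin.sum_univ_two, Matrix.conjTranspose_apply,
      Matrix.smul_apply, Matrix.one_apply] using h0
  rcases h01 with h01 | ⟨b, hba, hb⟩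
  · rcases h10 with h10 | ⟨c, hca, hc⟩
    · exact Or.inl ⟨h01, h10⟩
    · exfalso
      set z : Fin k → ℂ := fun _ => 1 with hz
      have hd := diag z
      have e01 : M z 0 1 = 0 := congrFun h01 z
      have sq00 := var_sq h00 z
      have sq11 := var_sq h11 z
      have sqc := var_sq hc z
      rw [e01, sq00, sq11, sqc] at hd
      simp [hz] at hd
  · rcases h10 with h10 | ⟨c, hca, hc⟩
    · exfalso
      set z : Fin k → ℂ := fun _ => 1 with hz
      have hd := diag z
      have e10 : M z 1 0 = 0 := congrFun h10 z
      have sq00 := var_sq h00 z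
      have sq11 := var_sq h11 z
      have sqb := var_sq hb z
      rw [e10, sq00, sq11, sqb] at hd
      simp [hz] at hd
    · by_cases hbc : b = c
      · exact Or.inr ⟨b, hba, hb, hbc ▸ hc⟩
      · exfalso
        set z : Fin k → ℂ := fun i => if i = c then 0 else 1 with hz
        have ho := offd z
        have e10 : M z 1 0 = 0 := var_zero hc (by simp [hz])
        have n00 : M z 0 0 ≠ 0 := var_ne h00 (by simp [hz, Ne.symm, hca.symm])
        have n01 : M z 0 1 ≠ 0 := var_ne hb (by simp [hz, hbc])
        rw [e10] at ho
        simp at ho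
        rcases ho with ho | ho
        · exact n00 ho
        · exact n01 ho
end

section
/- Let m be odd, and let C be a finite set with a map z : C → F_2^m such that: (a) every standard basis vector e_i is in the image of z; (b) whenever z(r) has weight at most m−2 and vanishes at distinct coordinates i, j, the vector z(r) + e_i + e_j is in the image of z; (c) the image of z is closed under complementation α ↦ α + (1,...,1). Then |C| ≥ 2^m. -/
/-- The (Hamming) weight of a 0-1 vector of length `m`. -/
def wt {m : ℕ} (α : Fin m → ZMod 2) : ℕ :=
  (Finset.univ.filter (fun i => α i = 1)).card

/-- The `i`-th standard basis vector of `F₂^m`. -/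
def stdBasis {m : ℕ} (i : Fin m) : Fin m → ZMod 2 :=
  fun j => if j = i then 1 else 0

/-- The all-ones vector of `F₂^m`. -/
def allOnes (m : ℕ) : Fin m → ZMod 2 := fun _ => 1

lemma zmod2_cases (a : ZMod 2) : a = 0 ∨ a = 1 := by revert a; decide

lemma wt_le {m : ℕ} (α : Fin m → ZMod 2) : wt α ≤ m := by
  classical
  calc wt α ≤ Finset.univ.card := Finset.card_filter_le _ _
    _ = m := by simp

lemma odd_reach (m : ℕ) (C : Type*) [Fintype C]
    (z : C → (Fin m → ZMod 2))
    (hbasis : ∀ i : Fin m, ∃ r : C, z r = stdBasis i)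
    (hflip : ∀ r : C, wt (z r) ≤ m - 2 → ∀ i j : Fin m, i ≠ j →
      z r i = 0 → z r j = 0 →
      ∃ r' : C, z r' = z r + stdBasis i + stdBasis j) :
    ∀ n : ℕ, ∀ α : Fin m → ZMod 2, wt α = n → Odd n → ∃ r : C, z r = α := by
  classical
  intro n
  induction n using Nat.strong_induction_on with
  | _ n ih =>
    intro α hwt hodd
    unfold wt at hwt
    rcases Nat.lt_or_ge n 2 with hn | hn
    · -- n = 1
      have hn1 : n = 1 := by
        rcases hodd with ⟨k, hk⟩; omega
      subst hn1
      have h1 : (Finset.univ.filter (fun i => α i = 1)).card = 1 := hwt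
      obtain ⟨i, hi⟩ := Finset.card_eq_one.mp h1
      have hαi : α i = 1 := by
        have : i ∈ Finset.univ.filter (fun i => α i = 1) := hi ▸ Finset.mem_singleton_self i
        simpa using this
      obtain ⟨r, hr⟩ := hbasis i
      refine ⟨r, hr.trans ?_⟩
      funext j
      by_cases hji : j = i
      · simp [stdBasis, hji, hαi]
      · have : j ∉ Finset.univ.filter (fun i => α i = 1) := by
          rw [hi]; simpa using hji
        have hαj : α j ≠ 1 := by simpa using this
        have : α j = 0 := (zmod2_cases (α j)).resolve_right hαj
        simp [stdBasis, hji, this]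
    · -- n ≥ 2, so since odd, n ≥ 3
      have h2 : 1 < (Finset.univ.filter (fun i => α i = 1)).card := by omega
      obtain ⟨i, hi, j, hj, hij⟩ := Finset.one_lt_card.mp h2
      have hαi : α i = 1 := by simpa using hi
      have hαj : α j = 1 := by simpa using hj
      set β : Fin m → ZMod 2 := α + stdBasis i + stdBasis j with hβ
      have hβi : β i = 0 := by
        simp [hβ, Pi.add_apply, stdBasis, hαi, if_neg hij]
        decide
      have hβj : β j = 0 := by
        simp [hβ, Pi.add_apply, stdBasis, hαj, if_neg (Ne.symm hij)]
        decide
      have hβk : ∀ k, k ≠ i → k ≠ j → β k = α k := by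
        intro k hki hkj
        simp [hβ, stdBasis, hki, hkj]
      have hfilter : (Finset.univ.filter (fun k => β k = 1)) =
          ((Finset.univ.filter (fun k => α k = 1)).erase i).erase j := by
        ext k
        simp only [Finset.mem_erase, Finset.mem_filter, Finset.mem_univ, true_and]
        constructor
        · intro hk
          have hki : k ≠ i := by rintro rfl; rw [hβi] at hk; exact absurd hk (by decide)
          have hkj : k ≠ j := by rintro rfl; rw [hβj] at hk; exact absurd hk (by decide)
          exact ⟨hkj, hki, (hβk k hki hkj) ▸ hk⟩
        · rintro ⟨hkj, hki, hk⟩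
          rw [hβk k hki hkj]; exact hk
      have hwtβ : wt β = n - 2 := by
        unfold wt
        rw [hfilter]
        rw [Finset.card_erase_of_mem, Finset.card_erase_of_mem hi]
        · omega
        · exact Finset.mem_erase.mpr ⟨hij.symm, hj⟩
      have hnm : n ≤ m := by have := wt_le α; unfold wt at this; omega
      have hoddβ : Odd (n - 2) := by
        rcases hodd with ⟨k, hk⟩; exact ⟨k - 1, by omega⟩
      obtain ⟨r, hr⟩ := ih (n - 2) (by omega) β hwtβ hoddβ
      have hwtr : wt (z r) ≤ m - 2 := by rw [hr, hwtβ]; omega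
      obtain ⟨r', hr'⟩ := hflip r hwtr i j (fun h => hij h) (hr ▸ hβi) (hr ▸ hβj)
      refine ⟨r', ?_⟩
      rw [hr', hr]
      funext k
      by_cases hki : k = i <;> by_cases hkj : k = j <;>
        simp_all [hβ, stdBasis, Pi.add_apply] <;> decide
  
/-- For `m` odd, a finite set `C` with a map `z : C → F₂^m` whose image
contains all standard basis vectors, is closed under two-bit flips (on zero coordinates
of vectors of weight ≤ m-2), and is closed under complementation, satisfies
`|C| ≥ 2^m`. -/
theorem bcod_delay_odd (m : ℕ) (hm : Odd m) (C : Type*) [Fintype C]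
    (z : C → (Fin m → ZMod 2))
    (hbasis : ∀ i : Fin m, ∃ r : C, z r = stdBasis i)
    (hflip : ∀ r : C, wt (z r) ≤ m - 2 → ∀ i j : Fin m, i ≠ j →
      z r i = 0 → z r j = 0 →
      ∃ r' : C, z r' = z r + stdBasis i + stdBasis j)
    (hcompl : ∀ r : C, ∃ r' : C, z r' = z r + allOnes m) :
    2 ^ m ≤ Fintype.card C := by
  classical
  have hsurj : Function.Surjective z := by
    intro α
    by_cases hodd : Odd (wt α)
    · exact odd_reach m C z hbasis hflip (wt α) α rfl hodd
    · -- complement has odd weight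
      set γ : Fin m → ZMod 2 := α + allOnes m with hγ
      have hfil : (Finset.univ.filter (fun k => γ k = 1)) =
          (Finset.univ.filter (fun k => α k = 1))ᶜ := by
        ext k
        simp only [Finset.mem_compl, Finset.mem_filter, Finset.mem_univ, true_and]
        rcases zmod2_cases (α k) with h | h <;> simp [hγ, allOnes, h] <;> decide
      have hwtγ : wt γ = m - wt α := by
        unfold wt
        rw [hfil, Finset.card_compl]
        simp [wt]
      have hoddγ : Odd (wt γ) := by
        rw [hwtγ]
        have := wt_le α
        rcases hm with ⟨a, ha⟩
        rcases Nat.even_or_odd (wt α) with he | ho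
        · rcases he with ⟨b, hb⟩
          exact ⟨a - b, by omega⟩
        · exact absurd ho hodd
      obtain ⟨r, hr⟩ := odd_reach m C z hbasis hflip (wt γ) γ rfl hoddγ
      obtain ⟨r', hr'⟩ := hcompl r
      refine ⟨r', ?_⟩
      rw [hr', hr]
      funext k
      rcases zmod2_cases (α k) with h | h <;> simp [hγ, allOnes, h] <;> decide
  have := Fintype.card_le_of_surjective z hsurj
  simpa using this
end

section
/- Let m be odd and let S ⊆ F_2^m satisfy: S contains a vector of weight 1; S is closed under the operation of flipping any two 0-coordinates of a member to 1 (when weight ≤ m−2); and S is closed under complementation. Then |S| = 2^m, i.e., S contains exactly all vectors; in particular starting from a single weight-1 vector, all weight-1 vectors are obtained. -/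
/-!
If `β ∈ S` and the support of `γ` contains that of `β` with an even number of extra
coordinates, then `γ ∈ S`: remove two extra coordinates, conclude by induction, and flip
them back. Starting from the weight-one vector this puts the all-ones vector in `S` (as `m`
is odd), hence its complement `0`, hence every even-weight vector; complementing these
gives every odd-weight vector, again because `m` is odd.
-/

open Finset

namespace F2Vector

variable {m : ℕ}

def ones (β : Fin m → ZMod 2) : Finset (Fin m) := univ.filter (fun i => β i = 1)

lemma wt_eq_card_ones (β : Fin m → ZMod 2) : wt β = #(ones β) := rfl

@[simp]
lemma mem_ones {β : Fin m → ZMod 2} {i : Fin m} : i ∈ ones β ↔ β i = 1 := by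
  simp [ones]

lemma notMem_ones {β : Fin m → ZMod 2} {i : Fin m} : i ∉ ones β ↔ β i = 0 := by
  rw [mem_ones]
  generalize β i = a
  revert a
  decide

lemma ones_injective : Function.Injective (ones : (Fin m → ZMod 2) → Finset (Fin m)) := by
  intro β γ h
  funext i
  have hi : β i = 1 ↔ γ i = 1 := by rw [← mem_ones, h, mem_ones]
  revert hi
  generalize β i = a
  generalize γ i = b
  revert a b
  decide

lemma wt_le (β : Fin m → ZMod 2) : wt β ≤ m := by
  simpa [wt_eq_card_ones] using card_le_univ (ones β)

lemma ones_add_stdBasis_of_mem {β : Fin m → ZMod 2} {i : Fin m} (h : i ∈ ones β) :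
    ones (β + stdBasis i) = (ones β).erase i := by
  ext l
  rw [mem_erase, mem_ones, mem_ones]
  by_cases hl : l = i
  · subst hl; simp [stdBasis, mem_ones.mp h]
  · simp [stdBasis, hl]

lemma wt_add_allOnes (β : Fin m → ZMod 2) : wt (β + allOnes m) = m - wt β := by
  have hones : ones (β + allOnes m) = univ \ ones β := by
    ext l
    simp only [mem_sdiff, mem_ones, mem_univ, true_and, Pi.add_apply, allOnes]
    generalize β l = a
    revert a
    decide
  rw [wt_eq_card_ones, hones, card_sdiff_of_subset (subset_univ _), card_univ,
    Fintype.card_fin, wt_eq_card_ones]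

@[simp]
lemma ones_zero : ones (0 : Fin m → ZMod 2) = ∅ := by
  ext; simp

@[simp]
lemma ones_allOnes : ones (allOnes m) = univ := by
  ext; simp [allOnes]

@[simp]
lemma wt_zero : wt (0 : Fin m → ZMod 2) = 0 := by
  simp [wt_eq_card_ones]

@[simp]
lemma wt_allOnes : wt (allOnes m) = m := by
  simp [wt_eq_card_ones]

lemma add_add_self (β γ : Fin m → ZMod 2) : β + γ + γ = β := by
  rw [add_assoc, ZModModule.add_self, add_zero]

def FlipClosed (S : Set (Fin m → ZMod 2)) : Prop :=
  ∀ α ∈ S, wt α ≤ m - 2 → ∀ i j : Fin m, i ≠ j → α i = 0 → α j = 0 →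
    α + stdBasis i + stdBasis j ∈ S

theorem FlipClosed.mem_of_ones_subset {S : Set (Fin m → ZMod 2)} (hS : FlipClosed S)
    {β γ : Fin m → ZMod 2} (hβ : β ∈ S) (hsub : ones β ⊆ ones γ)
    (heven : Even (wt γ - wt β)) : γ ∈ S := by
  obtain ⟨n, hn⟩ := heven
  induction n generalizing γ with
  | zero =>
    have hcard : #(ones γ) ≤ #(ones β) := by
      rw [← wt_eq_card_ones, ← wt_eq_card_ones]; omega
    rwa [← ones_injective (eq_of_subset_of_card_le hsub hcard)]
  | succ n ih =>
    have hcard : 1 < #(ones γ \ ones β) := by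
      rw [card_sdiff_of_subset hsub, ← wt_eq_card_ones, ← wt_eq_card_ones]; omega
    obtain ⟨i, hi, j, hj, hij⟩ := one_lt_card.mp hcard
    rw [mem_sdiff] at hi hj
    set γ' := γ + stdBasis i + stdBasis j
    have hj_mem : j ∈ (ones γ).erase i := mem_erase.mpr ⟨Ne.symm hij, hj.1⟩
    have hones : ones γ' = ((ones γ).erase i).erase j := by
      rw [ones_add_stdBasis_of_mem (ones_add_stdBasis_of_mem hi.1 ▸ hj_mem),
        ones_add_stdBasis_of_mem hi.1]
    have hwt : wt γ' + 2 = wt γ := by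
      rw [wt_eq_card_ones, wt_eq_card_ones, hones, ← card_erase_add_one hi.1,
        ← card_erase_add_one hj_mem]
    have hγ' : γ' ∈ S := by
      refine ih (fun l hl => ?_) (by omega)
      rw [hones, mem_erase, mem_erase]
      exact ⟨fun h => hj.2 (h ▸ hl), fun h => hi.2 (h ▸ hl), hsub hl⟩
    have hi' : γ' i = 0 := notMem_ones.mp (by simp [hones])
    have hj' : γ' j = 0 := notMem_ones.mp (by simp [hones])
    have hflipped := hS γ' hγ' (by have := wt_le γ; omega) i j hij hi' hj'
    rwa [add_right_comm (γ + stdBasis i) (stdBasis j), add_add_self, add_add_self] at hflipped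

end F2Vector

open F2Vector in
/-- For `m` odd, a set `S ⊆ F₂^m` containing a vector of weight 1, closed
under flipping any two zero coordinates of a member of weight ≤ m-2, and closed under
complementation, is all of `F₂^m`; in particular it has exactly `2^m` elements. -/
theorem single_weight_one_generates (m : ℕ) (hm : Odd m) (S : Set (Fin m → ZMod 2))
    (hone : ∃ α ∈ S, wt α = 1)
    (hflip : ∀ α ∈ S, wt α ≤ m - 2 → ∀ i j : Fin m, i ≠ j → α i = 0 → α j = 0 →
      α + stdBasis i + stdBasis j ∈ S)
    (hcompl : ∀ α ∈ S, α + allOnes m ∈ S) :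
    S = Set.univ := by
  have hS : FlipClosed S := hflip
  obtain ⟨α, hαS, hα⟩ := hone
  have hall : allOnes m ∈ S :=
    hS.mem_of_ones_subset hαS (by simp) (by
      rw [wt_allOnes, hα]; exact hm.tsub_odd odd_one)
  have hzero : (0 : Fin m → ZMod 2) ∈ S := by
    simpa [ZModModule.add_self] using hcompl _ hall
  have heven : ∀ γ, Even (wt γ) → γ ∈ S := fun γ hγ =>
    hS.mem_of_ones_subset hzero (by simp) (by rwa [wt_zero, Nat.sub_zero])
  refine Set.eq_univ_of_forall fun γ => (Nat.even_or_odd (wt γ)).elim (heven γ) fun hγ => ?_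
  have hcompl_even : Even (wt (γ + allOnes m)) := by
    rw [wt_add_allOnes]; exact hm.tsub_odd hγ
  simpa [add_add_self] using hcompl _ (heven _ hcompl_even)
end
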